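/- Let 0 < b < Λ and suppose (μ/σ)·(T_max/T_min)^{σ−1}·(Λ+b)/(Λ−b) < 1. Then there exists a constant L_w > 0, depending only on μ, σ, F, T_min, T_max, Λ, b and Φ, such that for all λ₁, λ₂ ∈ L¹(Ω) with Λ − b ≤ ‖λᵢ‖_{L¹} ≤ Λ + b, if W₁, W₂ ∈ C_{0+}(Ω) are the solutions of the wage fixed-point equations for λ₁ and λ₂ respectively, then ‖W₁ − W₂‖_∞ ≤ L_w · ‖λ₁ − λ₂‖_{L¹}. -/

import Mathlib

open MeasureTheory Real Set

/-- The price index operator `G[λ](x) = [(1/F) ∫_Ω |λ(y)| T(x,y)^{1-σ} dy]^{1/(1-σ)}`. -/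
noncomputable def priceIndex {n : ℕ} (Ω : Set (Fin n → ℝ)) (F σ : ℝ)
    (T : (Fin n → ℝ) → (Fin n → ℝ) → ℝ) (lam : (Fin n → ℝ) → ℝ)
    (x : Fin n → ℝ) : ℝ :=
  ((1 / F) * ∫ y in Ω, |lam y| * T x y ^ (1 - σ)) ^ (1 / (1 - σ))

/-- `W` is a nonnegative continuous solution on `Ω` of the wage fixed-point equation for `lam`. -/
def IsWageSolution {n : ℕ} (Ω : Set (Fin n → ℝ)) (F σ μ : ℝ)
    (T : (Fin n → ℝ) → (Fin n → ℝ) → ℝ) (φ lam W : (Fin n → ℝ) → ℝ) : Prop :=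
  ContinuousOn W Ω ∧ (∀ x ∈ Ω, 0 ≤ W x) ∧
  ∀ x ∈ Ω, W x = (μ / (σ * F)) *
    ∫ y in Ω, (W y * |lam y| + φ y) * priceIndex Ω F σ T lam y ^ (σ - 1) * T x y ^ (1 - σ)

/-- Sup norm of `f` over the region `Ω`. -/
noncomputable def supNormOn {n : ℕ} (Ω : Set (Fin n → ℝ)) (f : (Fin n → ℝ) → ℝ) : ℝ :=
  sSup ((fun x => |f x|) '' Ω)

/-!
Put `k = T^{1-σ}`, so `Tmax^{1-σ} ≤ k ≤ Tmin^{1-σ}`, and let `A_λ(y) = ∫ |λ| k(y, ·)` be the market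
access, which is comparable to `‖λ‖₁`. Since `G[λ]^{σ-1} = F / A_λ`, the wage equation reads
`W = (μ/σ) ∫ (W |λ| + φ) k(x, ·) / A_λ`, and the factor `k(x, y) / A_λ(y)` is at most
`(Tmax/Tmin)^{σ-1} / ‖λ‖₁`. Hence the right-hand side is a contraction in `W` with constant
`κ = (μ/σ) (Tmax/Tmin)^{σ-1} < 1`, which first bounds every solution by `κ Φ / ((1 - κ)(Λ - b))`.
Splitting the difference of the two right-hand sides into the changes of `W`, of `|λ|` and of
`1 / A_λ` then gives `‖W₁ - W₂‖ ≤ κ ‖W₁ - W₂‖ + K ‖λ₁ - λ₂‖₁`, so `L_w = K / (1 - κ)` works.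
-/

lemma rpow_mem_Icc_of_nonpos {a b t s : ℝ} (ha : 0 < a) (ht : t ∈ Icc a b) (hs : s ≤ 0) :
    t ^ s ∈ Icc (b ^ s) (a ^ s) :=
  ⟨rpow_le_rpow_of_nonpos (ha.trans_le ht.1) ht.2 hs, rpow_le_rpow_of_nonpos ha ht.1 hs⟩

lemma rpow_one_div_one_sub_rpow_sub_one {a σ : ℝ} (ha : 0 ≤ a) (hσ : σ ≠ 1) :
    (a ^ (1 / (1 - σ))) ^ (σ - 1) = a⁻¹ := by
  have h1σ : 1 - σ ≠ 0 := sub_ne_zero.mpr hσ.symm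
  rw [← rpow_mul ha, show 1 / (1 - σ) * (σ - 1) = -1 by field_simp; ring, rpow_neg_one]

lemma abs_wage_integrand_sub_le {a₁ a₂ l₁ l₂ p g₁ g₂ d M G H : ℝ} (hd : |a₁ - a₂| ≤ d)
    (ha₂ : a₂ ∈ Icc 0 M) (hp : 0 ≤ p) (hg₁ : g₁ ∈ Icc 0 G) (hg : |g₁ - g₂| ≤ H) :
    |(a₁ * |l₁| + p) * g₁ - (a₂ * |l₂| + p) * g₂| ≤
      d * |l₁| * G + M * |l₁ - l₂| * G + (M * |l₂| + p) * H := by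
  obtain ⟨ha₂0, ha₂M⟩ := ha₂
  obtain ⟨hg₁0, hg₁G⟩ := hg₁
  have hd0 : 0 ≤ d := (abs_nonneg _).trans hd
  have hM0 : 0 ≤ M := ha₂0.trans ha₂M
  have hsplit : (a₁ * |l₁| + p) * g₁ - (a₂ * |l₂| + p) * g₂ =
      (a₁ - a₂) * |l₁| * g₁ + a₂ * (|l₁| - |l₂|) * g₁ + (a₂ * |l₂| + p) * (g₁ - g₂) := by ring
  rw [hsplit]
  refine (abs_add_three _ _ _).trans (add_le_add (add_le_add ?_ ?_) ?_)
  · rw [abs_mul, abs_mul, abs_abs, abs_of_nonneg hg₁0]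
    gcongr
  · rw [abs_mul, abs_mul, abs_of_nonneg ha₂0, abs_of_nonneg hg₁0]
    have := abs_abs_sub_abs_le_abs_sub l₁ l₂
    gcongr ?_ * ?_ * ?_
  · rw [abs_mul, abs_of_nonneg (by positivity)]
    gcongr

section SupNorm

variable {n : ℕ} {Ω : Set (Fin n → ℝ)} {f : (Fin n → ℝ) → ℝ}

lemma supNormOn_nonneg : 0 ≤ supNormOn Ω f :=
  Real.sSup_nonneg (by rintro _ ⟨x, -, rfl⟩; exact abs_nonneg _)

lemma abs_le_supNormOn (hΩ : IsCompact Ω) (hf : ContinuousOn f Ω) {x : Fin n → ℝ} (hx : x ∈ Ω) :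
    |f x| ≤ supNormOn Ω f :=
  le_csSup (hΩ.image_of_continuousOn hf.abs).bddAbove ⟨x, hx, rfl⟩

lemma supNormOn_le (hΩ : Ω.Nonempty) {C : ℝ} (h : ∀ x ∈ Ω, |f x| ≤ C) : supNormOn Ω f ≤ C :=
  csSup_le (hΩ.image _) (by rintro _ ⟨x, hx, rfl⟩; exact h x hx)

end SupNorm

noncomputable def marketAccess {n : ℕ} (Ω : Set (Fin n → ℝ))
    (k : (Fin n → ℝ) → (Fin n → ℝ) → ℝ) (lam : (Fin n → ℝ) → ℝ) (y : Fin n → ℝ) : ℝ :=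
  ∫ z in Ω, |lam z| * k y z

/-- The right-hand side of the wage equation once `G[λ]^{σ-1}` is written as `F / marketAccess`;
the wage equation itself has kernel `k = T^{1-σ}` and `c = μ/σ`. -/
noncomputable def wageOperator {n : ℕ} (Ω : Set (Fin n → ℝ))
    (k : (Fin n → ℝ) → (Fin n → ℝ) → ℝ) (c : ℝ) (φ lam W : (Fin n → ℝ) → ℝ)
    (x : Fin n → ℝ) : ℝ :=
  c * ∫ y in Ω, (W y * |lam y| + φ y) * (k x y / marketAccess Ω k lam y)

noncomputable def wageBound (κ Φ m : ℝ) : ℝ := κ * Φ / ((1 - κ) * m)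

noncomputable def wageLipschitzConst (κ ρ Φ m : ℝ) : ℝ :=
  κ / m * (wageBound κ Φ m + (wageBound κ Φ m + Φ / m) * ρ) / (1 - κ)

lemma wageLipschitzConst_pos {κ ρ Φ m : ℝ} (hκ₀ : 0 < κ) (hκ₁ : κ < 1) (hρ : 0 ≤ ρ)
    (hΦ : 0 < Φ) (hm : 0 < m) : 0 < wageLipschitzConst κ ρ Φ m := by
  have : 0 < 1 - κ := by linarith
  unfold wageLipschitzConst wageBound
  positivity

section WageEquation

variable {n : ℕ} {Ω : Set (Fin n → ℝ)} {k T : (Fin n → ℝ) → (Fin n → ℝ) → ℝ}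
  {kmin kmax c F σ μ : ℝ} {φ lam lam₁ lam₂ W W₁ W₂ : (Fin n → ℝ) → ℝ} {x y : Fin n → ℝ}

lemma priceIndex_rpow_sub_one (hF : 0 ≤ F) (hσ : σ ≠ 1)
    (hA : 0 ≤ marketAccess Ω (fun x y => T x y ^ (1 - σ)) lam y) :
    priceIndex Ω F σ T lam y ^ (σ - 1) =
      F / marketAccess Ω (fun x y => T x y ^ (1 - σ)) lam y := by
  rw [show priceIndex Ω F σ T lam y =
      (1 / F * marketAccess Ω (fun x y => T x y ^ (1 - σ)) lam y) ^ (1 / (1 - σ)) from rfl,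
    rpow_one_div_one_sub_rpow_sub_one (by positivity) hσ, mul_inv, one_div, inv_inv,
    div_eq_mul_inv]

lemma IsWageSolution.eqOn_wageOperator (hΩ : MeasurableSet Ω) (hF : 0 < F) (hσ : σ ≠ 1)
    (hT0 : ∀ x ∈ Ω, ∀ y ∈ Ω, 0 ≤ T x y) (h : IsWageSolution Ω F σ μ T φ lam W) :
    EqOn W (wageOperator Ω (fun x y => T x y ^ (1 - σ)) (μ / σ) φ lam W) Ω := by
  intro x hx
  have hintegrand : EqOn
      (fun y => (W y * |lam y| + φ y) * priceIndex Ω F σ T lam y ^ (σ - 1) * T x y ^ (1 - σ))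
      (fun y => F * ((W y * |lam y| + φ y) *
        (T x y ^ (1 - σ) / marketAccess Ω (fun x y => T x y ^ (1 - σ)) lam y))) Ω :=
    fun y hy => by
      dsimp only
      rw [priceIndex_rpow_sub_one hF.le hσ (setIntegral_nonneg hΩ fun z hz =>
        mul_nonneg (abs_nonneg _) (rpow_nonneg (hT0 y hy z hz) _))]
      ring
  rw [h.2.2 x hx, setIntegral_congr_fun hΩ hintegrand, integral_const_mul]
  simp only [wageOperator]
  field_simp

lemma integrableOn_abs_mul_kernel (hΩ : IsCompact Ω)
    (hkc : ContinuousOn (Function.uncurry k) (Ω ×ˢ Ω)) (hlam : IntegrableOn lam Ω) (hy : y ∈ Ω) :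
    IntegrableOn (fun z => |lam z| * k y z) Ω :=
  IntegrableOn.mul_continuousOn hlam.abs (hkc.uncurry_left y hy) hΩ

lemma marketAccess_mem_Icc (hΩ : IsCompact Ω)
    (hkc : ContinuousOn (Function.uncurry k) (Ω ×ˢ Ω))
    (hk : ∀ x ∈ Ω, ∀ y ∈ Ω, k x y ∈ Icc kmin kmax) (hlam : IntegrableOn lam Ω) (hy : y ∈ Ω) :
    marketAccess Ω k lam y ∈ Icc (kmin * ∫ z in Ω, |lam z|) (kmax * ∫ z in Ω, |lam z|) := by
  have hint := integrableOn_abs_mul_kernel hΩ hkc hlam hy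
  rw [marketAccess, ← integral_const_mul, ← integral_const_mul]
  constructor
  · refine setIntegral_mono_on (hlam.abs.const_mul _) hint hΩ.measurableSet fun z hz => ?_
    rw [mul_comm]
    exact mul_le_mul_of_nonneg_left (hk y hy z hz).1 (abs_nonneg _)
  · refine setIntegral_mono_on hint (hlam.abs.const_mul _) hΩ.measurableSet fun z hz => ?_
    rw [mul_comm kmax]
    exact mul_le_mul_of_nonneg_left (hk y hy z hz).2 (abs_nonneg _)

lemma abs_marketAccess_sub_le (hΩ : IsCompact Ω)
    (hkc : ContinuousOn (Function.uncurry k) (Ω ×ˢ Ω)) (hkmin : 0 ≤ kmin)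
    (hk : ∀ x ∈ Ω, ∀ y ∈ Ω, k x y ∈ Icc kmin kmax) (hlam₁ : IntegrableOn lam₁ Ω)
    (hlam₂ : IntegrableOn lam₂ Ω) (hy : y ∈ Ω) :
    |marketAccess Ω k lam₁ y - marketAccess Ω k lam₂ y| ≤
      kmax * ∫ z in Ω, |lam₁ z - lam₂ z| := by
  rw [marketAccess, marketAccess, ← integral_sub (integrableOn_abs_mul_kernel hΩ hkc hlam₁ hy)
    (integrableOn_abs_mul_kernel hΩ hkc hlam₂ hy), ← integral_const_mul, ← Real.norm_eq_abs]
  refine norm_integral_le_of_norm_le ((hlam₁.sub hlam₂).abs.const_mul _) ?_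
  filter_upwards [ae_restrict_mem hΩ.measurableSet] with z hz
  have hkz := hk y hy z hz
  rw [Real.norm_eq_abs, ← sub_mul, abs_mul, abs_of_nonneg (hkmin.trans hkz.1), mul_comm kmax]
  exact mul_le_mul (abs_abs_sub_abs_le_abs_sub _ _) hkz.2 (hkmin.trans hkz.1) (abs_nonneg _)

lemma aestronglyMeasurable_marketAccess (hΩ : IsCompact Ω)
    (hkc : ContinuousOn (Function.uncurry k) (Ω ×ˢ Ω)) (hlam : IntegrableOn lam Ω) :
    AEStronglyMeasurable (marketAccess Ω k lam) (volume.restrict Ω) := by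
  have hprod : AEStronglyMeasurable (fun p : (Fin n → ℝ) × (Fin n → ℝ) => |lam p.2| * k p.1 p.2)
      ((volume.restrict Ω).prod (volume.restrict Ω)) := by
    refine hlam.abs.aestronglyMeasurable.comp_snd.mul ?_
    rw [Measure.prod_restrict]
    exact hkc.aestronglyMeasurable (hΩ.measurableSet.prod hΩ.measurableSet)
  exact hprod.integral_prod_right'

lemma kernel_div_marketAccess_mem_Icc (hΩ : IsCompact Ω)
    (hkc : ContinuousOn (Function.uncurry k) (Ω ×ˢ Ω)) (hkmin : 0 < kmin)
    (hk : ∀ x ∈ Ω, ∀ y ∈ Ω, k x y ∈ Icc kmin kmax) (hlam : IntegrableOn lam Ω)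
    (hnorm : 0 < ∫ z in Ω, |lam z|) (hx : x ∈ Ω) (hy : y ∈ Ω) :
    k x y / marketAccess Ω k lam y ∈ Icc 0 (kmax / (kmin * ∫ z in Ω, |lam z|)) := by
  have hA := (marketAccess_mem_Icc hΩ hkc hk hlam hy).1
  have hkxy := hk x hx y hy
  exact ⟨div_nonneg (hkmin.le.trans hkxy.1) ((mul_pos hkmin hnorm).le.trans hA),
    div_le_div₀ (hkmin.le.trans (hkxy.1.trans hkxy.2)) hkxy.2 (mul_pos hkmin hnorm) hA⟩

lemma abs_kernel_div_marketAccess_sub_le (hΩ : IsCompact Ω)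
    (hkc : ContinuousOn (Function.uncurry k) (Ω ×ˢ Ω)) (hkmin : 0 < kmin)
    (hk : ∀ x ∈ Ω, ∀ y ∈ Ω, k x y ∈ Icc kmin kmax) (hlam₁ : IntegrableOn lam₁ Ω)
    (hlam₂ : IntegrableOn lam₂ Ω) (hnorm₁ : 0 < ∫ z in Ω, |lam₁ z|)
    (hnorm₂ : 0 < ∫ z in Ω, |lam₂ z|) (hx : x ∈ Ω) (hy : y ∈ Ω) :
    |k x y / marketAccess Ω k lam₁ y - k x y / marketAccess Ω k lam₂ y| ≤
      kmax * (kmax * ∫ z in Ω, |lam₁ z - lam₂ z|) /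
        ((kmin * ∫ z in Ω, |lam₁ z|) * (kmin * ∫ z in Ω, |lam₂ z|)) := by
  have hA₁ := (marketAccess_mem_Icc hΩ hkc hk hlam₁ hy).1
  have hA₂ := (marketAccess_mem_Icc hΩ hkc hk hlam₂ hy).1
  have hpos₁ := (mul_pos hkmin hnorm₁).trans_le hA₁
  have hpos₂ := (mul_pos hkmin hnorm₂).trans_le hA₂
  have hkxy := hk x hx y hy
  have hk0 : 0 ≤ k x y := hkmin.le.trans hkxy.1
  have hnum : |k x y * marketAccess Ω k lam₂ y - marketAccess Ω k lam₁ y * k x y| ≤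
      kmax * (kmax * ∫ z in Ω, |lam₁ z - lam₂ z|) :=
    calc |k x y * marketAccess Ω k lam₂ y - marketAccess Ω k lam₁ y * k x y|
        = k x y * |marketAccess Ω k lam₁ y - marketAccess Ω k lam₂ y| := by
          rw [← abs_of_nonneg hk0, ← abs_mul, ← abs_neg, abs_of_nonneg hk0]
          ring_nf
      _ ≤ kmax * (kmax * ∫ z in Ω, |lam₁ z - lam₂ z|) :=
          mul_le_mul hkxy.2 (abs_marketAccess_sub_le hΩ hkc hkmin.le hk hlam₁ hlam₂ hy)
            (abs_nonneg _) (hk0.trans hkxy.2)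
  rw [div_sub_div _ _ hpos₁.ne' hpos₂.ne', abs_div, abs_of_pos (mul_pos hpos₁ hpos₂)]
  exact div_le_div₀ ((abs_nonneg _).trans hnum) hnum (by positivity)
    (mul_le_mul hA₁ hA₂ (mul_pos hkmin hnorm₂).le hpos₁.le)

lemma integrableOn_wage_integrand (hΩ : IsCompact Ω)
    (hkc : ContinuousOn (Function.uncurry k) (Ω ×ˢ Ω)) (hkmin : 0 < kmin)
    (hk : ∀ x ∈ Ω, ∀ y ∈ Ω, k x y ∈ Icc kmin kmax) (hφ : IntegrableOn φ Ω)
    (hlam : IntegrableOn lam Ω) (hnorm : 0 < ∫ z in Ω, |lam z|) (hW : ContinuousOn W Ω)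
    (hx : x ∈ Ω) :
    IntegrableOn (fun y => (W y * |lam y| + φ y) * (k x y / marketAccess Ω k lam y)) Ω := by
  refine ((IntegrableOn.continuousOn_mul hW hlam.abs hΩ).add hφ).mul_bdd
    (c := kmax / (kmin * ∫ z in Ω, |lam z|)) ?_ ?_
  · exact (((hkc.uncurry_left x hx).aestronglyMeasurable hΩ.measurableSet).aemeasurable.div
      (aestronglyMeasurable_marketAccess hΩ hkc hlam).aemeasurable).aestronglyMeasurable
  · filter_upwards [ae_restrict_mem hΩ.measurableSet] with y hy
    have h := kernel_div_marketAccess_mem_Icc hΩ hkc hkmin hk hlam hnorm hx hy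
    rw [Real.norm_eq_abs, abs_of_nonneg h.1]
    exact h.2

lemma wageOperator_le (hΩ : IsCompact Ω) (hkc : ContinuousOn (Function.uncurry k) (Ω ×ˢ Ω))
    (hkmin : 0 < kmin) (hk : ∀ x ∈ Ω, ∀ y ∈ Ω, k x y ∈ Icc kmin kmax) (hc : 0 ≤ c)
    (hφ : IntegrableOn φ Ω) (hφ0 : ∀ᵐ y ∂(volume.restrict Ω), 0 ≤ φ y)
    (hlam : IntegrableOn lam Ω) (hnorm : 0 < ∫ z in Ω, |lam z|) (hW : ContinuousOn W Ω)
    (hW0 : ∀ y ∈ Ω, 0 ≤ W y) (hx : x ∈ Ω) :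
    wageOperator Ω k c φ lam W x ≤
      c * (kmax / kmin) * (supNormOn Ω W + (∫ y in Ω, φ y) / ∫ z in Ω, |lam z|) := by
  set g := kmax / (kmin * ∫ z in Ω, |lam z|)
  have hmono : ∫ y in Ω, (W y * |lam y| + φ y) * (k x y / marketAccess Ω k lam y) ≤
      ∫ y in Ω, (supNormOn Ω W * |lam y| + φ y) * g := by
    refine setIntegral_mono_ae_restrict
      (integrableOn_wage_integrand hΩ hkc hkmin hk hφ hlam hnorm hW hx)
      (((hlam.abs.const_mul _).add hφ).mul_const _) ?_
    filter_upwards [ae_restrict_mem hΩ.measurableSet, hφ0] with y hy hφy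
    have hg := kernel_div_marketAccess_mem_Icc hΩ hkc hkmin hk hlam hnorm hx hy
    have hWy : W y ≤ supNormOn Ω W := (le_abs_self _).trans (abs_le_supNormOn hΩ hW hy)
    have hW0y := hW0 y hy
    have hM0 : 0 ≤ supNormOn Ω W := supNormOn_nonneg
    exact mul_le_mul (by gcongr) hg.2 hg.1 (by positivity)
  rw [integral_mul_const, integral_add (hlam.abs.const_mul _) hφ, integral_const_mul] at hmono
  rw [wageOperator]
  calc c * ∫ y in Ω, (W y * |lam y| + φ y) * (k x y / marketAccess Ω k lam y)
      ≤ c * ((supNormOn Ω W * ∫ z in Ω, |lam z|) + ∫ y in Ω, φ y) * g :=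
        by rw [mul_assoc]; exact mul_le_mul_of_nonneg_left hmono hc
    _ = _ := by simp only [g]; field_simp

lemma supNormOn_le_wageBound (hΩ : IsCompact Ω) (hΩne : Ω.Nonempty)
    (hkc : ContinuousOn (Function.uncurry k) (Ω ×ˢ Ω)) (hkmin : 0 < kmin)
    (hk : ∀ x ∈ Ω, ∀ y ∈ Ω, k x y ∈ Icc kmin kmax) (hc : 0 ≤ c) (hκ : c * (kmax / kmin) < 1)
    (hφ : IntegrableOn φ Ω) (hφ0 : ∀ᵐ y ∂(volume.restrict Ω), 0 ≤ φ y)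
    (hlam : IntegrableOn lam Ω) (hnorm : 0 < ∫ z in Ω, |lam z|) (hW : ContinuousOn W Ω)
    (hW0 : ∀ y ∈ Ω, 0 ≤ W y) (hsol : EqOn W (wageOperator Ω k c φ lam W) Ω) :
    supNormOn Ω W ≤ wageBound (c * (kmax / kmin)) (∫ y in Ω, φ y) (∫ z in Ω, |lam z|) := by
  set κ := c * (kmax / kmin)
  have h : supNormOn Ω W ≤ κ * (supNormOn Ω W + (∫ y in Ω, φ y) / ∫ z in Ω, |lam z|) :=
    supNormOn_le hΩne fun x hx => by
      rw [abs_of_nonneg (hW0 x hx), hsol hx]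
      exact wageOperator_le hΩ hkc hkmin hk hc hφ hφ0 hlam hnorm hW hW0 hx
  rw [wageBound, le_div_iff₀ (mul_pos (by linarith) hnorm)]
  calc supNormOn Ω W * ((1 - κ) * ∫ z in Ω, |lam z|)
      = ((1 - κ) * supNormOn Ω W) * ∫ z in Ω, |lam z| := by ring
    _ ≤ κ * ((∫ y in Ω, φ y) / ∫ z in Ω, |lam z|) * ∫ z in Ω, |lam z| :=
        mul_le_mul_of_nonneg_right (by linarith) hnorm.le
    _ = κ * ∫ y in Ω, φ y := by field_simp

lemma abs_wageOperator_sub_le (hΩ : IsCompact Ω)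
    (hkc : ContinuousOn (Function.uncurry k) (Ω ×ˢ Ω)) (hkmin : 0 < kmin)
    (hk : ∀ x ∈ Ω, ∀ y ∈ Ω, k x y ∈ Icc kmin kmax) (hc : 0 ≤ c)
    (hφ : IntegrableOn φ Ω) (hφ0 : ∀ᵐ y ∂(volume.restrict Ω), 0 ≤ φ y)
    (hlam₁ : IntegrableOn lam₁ Ω) (hlam₂ : IntegrableOn lam₂ Ω)
    (hnorm₁ : 0 < ∫ z in Ω, |lam₁ z|) (hnorm₂ : 0 < ∫ z in Ω, |lam₂ z|)
    (hW₁ : ContinuousOn W₁ Ω) (hW₂ : ContinuousOn W₂ Ω) (hW₂0 : ∀ y ∈ Ω, 0 ≤ W₂ y)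
    (hx : x ∈ Ω) :
    |wageOperator Ω k c φ lam₁ W₁ x - wageOperator Ω k c φ lam₂ W₂ x| ≤
      c * (kmax / kmin) * supNormOn Ω (fun y => W₁ y - W₂ y) +
        c * (kmax / kmin) / (∫ z in Ω, |lam₁ z|) * (supNormOn Ω W₂ +
          (supNormOn Ω W₂ + (∫ y in Ω, φ y) / ∫ z in Ω, |lam₂ z|) * (kmax / kmin)) *
          ∫ z in Ω, |lam₁ z - lam₂ z| := by
  set L₁ := ∫ z in Ω, |lam₁ z|
  set L₂ := ∫ z in Ω, |lam₂ z|
  set D := ∫ z in Ω, |lam₁ z - lam₂ z|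
  set DW := supNormOn Ω (fun y => W₁ y - W₂ y)
  set M := supNormOn Ω W₂
  set G := kmax / (kmin * L₁)
  set H := kmax * (kmax * D) / ((kmin * L₁) * (kmin * L₂))
  have hbound : ∀ᵐ y ∂(volume.restrict Ω),
      ‖(W₁ y * |lam₁ y| + φ y) * (k x y / marketAccess Ω k lam₁ y) -
        (W₂ y * |lam₂ y| + φ y) * (k x y / marketAccess Ω k lam₂ y)‖ ≤
      DW * |lam₁ y| * G + M * |lam₁ y - lam₂ y| * G + (M * |lam₂ y| + φ y) * H := by
    filter_upwards [ae_restrict_mem hΩ.measurableSet, hφ0] with y hy hφy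
    exact abs_wage_integrand_sub_le (abs_le_supNormOn hΩ (hW₁.sub hW₂) hy)
      ⟨hW₂0 y hy, (le_abs_self _).trans (abs_le_supNormOn hΩ hW₂ hy)⟩ hφy
      (kernel_div_marketAccess_mem_Icc hΩ hkc hkmin hk hlam₁ hnorm₁ hx hy)
      (abs_kernel_div_marketAccess_sub_le hΩ hkc hkmin hk hlam₁ hlam₂ hnorm₁ hnorm₂ hx hy)
  have hint₁ : IntegrableOn (fun y => DW * |lam₁ y| * G) Ω := (hlam₁.abs.const_mul DW).mul_const G
  have hint₂ : IntegrableOn (fun y => M * |lam₁ y - lam₂ y| * G) Ω :=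
    ((hlam₁.sub hlam₂).abs.const_mul M).mul_const G
  have hint₃ : IntegrableOn (fun y => (M * |lam₂ y| + φ y) * H) Ω :=
    ((hlam₂.abs.const_mul M).add hφ).mul_const H
  have hint : IntegrableOn (fun y => DW * |lam₁ y| * G + M * |lam₁ y - lam₂ y| * G +
      (M * |lam₂ y| + φ y) * H) Ω := (hint₁.add hint₂).add hint₃
  have hdiff := norm_integral_le_of_norm_le hint hbound
  rw [integral_sub (integrableOn_wage_integrand hΩ hkc hkmin hk hφ hlam₁ hnorm₁ hW₁ hx)
      (integrableOn_wage_integrand hΩ hkc hkmin hk hφ hlam₂ hnorm₂ hW₂ hx),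
    integral_add (f := fun y => DW * |lam₁ y| * G + M * |lam₁ y - lam₂ y| * G)
      (hint₁.add hint₂) hint₃,
    integral_add hint₁ hint₂, integral_mul_const, integral_mul_const, integral_mul_const,
    integral_add (hlam₂.abs.const_mul M) hφ, integral_const_mul, integral_const_mul,
    integral_const_mul, Real.norm_eq_abs] at hdiff
  rw [wageOperator, wageOperator, ← mul_sub, abs_mul, abs_of_nonneg hc]
  calc c * |_| ≤ c * (DW * L₁ * G + M * D * G + (M * L₂ + ∫ y in Ω, φ y) * H) :=
        mul_le_mul_of_nonneg_left hdiff hc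
    _ = _ := by simp only [G, H]; field_simp; ring

lemma supNormOn_sub_le_of_eqOn_wageOperator (hΩ : IsCompact Ω) (hΩne : Ω.Nonempty)
    (hkc : ContinuousOn (Function.uncurry k) (Ω ×ˢ Ω)) (hkmin : 0 < kmin)
    (hk : ∀ x ∈ Ω, ∀ y ∈ Ω, k x y ∈ Icc kmin kmax) (hc : 0 ≤ c) (hκ : c * (kmax / kmin) < 1)
    (hφ : IntegrableOn φ Ω) (hφ0 : ∀ᵐ y ∂(volume.restrict Ω), 0 ≤ φ y) {m : ℝ} (hm : 0 < m)
    (hlam₁ : IntegrableOn lam₁ Ω) (hlam₂ : IntegrableOn lam₂ Ω)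
    (hm₁ : m ≤ ∫ z in Ω, |lam₁ z|) (hm₂ : m ≤ ∫ z in Ω, |lam₂ z|)
    (hW₁ : ContinuousOn W₁ Ω) (hW₂ : ContinuousOn W₂ Ω) (hW₂0 : ∀ y ∈ Ω, 0 ≤ W₂ y)
    (hsol₁ : EqOn W₁ (wageOperator Ω k c φ lam₁ W₁) Ω)
    (hsol₂ : EqOn W₂ (wageOperator Ω k c φ lam₂ W₂) Ω) :
    supNormOn Ω (fun x => W₁ x - W₂ x) ≤
      wageLipschitzConst (c * (kmax / kmin)) (kmax / kmin) (∫ y in Ω, φ y) m *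
        ∫ z in Ω, |lam₁ z - lam₂ z| := by
  set κ := c * (kmax / kmin)
  set Φ := ∫ y in Ω, φ y
  set M := wageBound κ Φ m
  have hnorm₁ := hm.trans_le hm₁
  have hnorm₂ := hm.trans_le hm₂
  have h1κ : 0 < 1 - κ := by linarith
  have hΦ : 0 ≤ Φ := integral_nonneg_of_ae hφ0
  have hρ : 0 ≤ kmax / kmin := by
    obtain ⟨x, hx⟩ := hΩne
    exact div_nonneg (hkmin.le.trans ((hk x hx x hx).1.trans (hk x hx x hx).2)) hkmin.le
  have hM : supNormOn Ω W₂ ≤ M := by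
    refine (supNormOn_le_wageBound hΩ hΩne hkc hkmin hk hc hκ hφ hφ0 hlam₂ hnorm₂ hW₂ hW₂0
      hsol₂).trans ?_
    unfold M wageBound
    gcongr
  have hstep : supNormOn Ω (fun x => W₁ x - W₂ x) ≤ κ * supNormOn Ω (fun x => W₁ x - W₂ x) +
      κ / m * (M + (M + Φ / m) * (kmax / kmin)) * ∫ z in Ω, |lam₁ z - lam₂ z| :=
    supNormOn_le hΩne fun x hx => by
      rw [hsol₁ hx, hsol₂ hx]
      refine (abs_wageOperator_sub_le hΩ hkc hkmin hk hc hφ hφ0 hlam₁ hlam₂ hnorm₁ hnorm₂ hW₁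
        hW₂ hW₂0 hx).trans ?_
      have hM0 : 0 ≤ supNormOn Ω W₂ := supNormOn_nonneg
      gcongr
  rw [wageLipschitzConst, div_mul_eq_mul_div, le_div_iff₀ h1κ]
  linarith

end WageEquation

theorem wage_solution_lipschitz_general {n : ℕ} (Ω : Set (Fin n → ℝ))
    (hΩc : IsCompact Ω) (hΩpos : 0 < volume Ω)
    (T : (Fin n → ℝ) → (Fin n → ℝ) → ℝ)
    (hTcont : ContinuousOn (fun p : (Fin n → ℝ) × (Fin n → ℝ) => T p.1 p.2) (Ω ×ˢ Ω))
    (Tmin Tmax : ℝ) (hTmin : 1 ≤ Tmin)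
    (hT : ∀ x ∈ Ω, ∀ y ∈ Ω, T x y ∈ Icc Tmin Tmax)
    (σ μ F Λ Φ : ℝ) (hσ : 1 < σ) (hμ : μ ∈ Ioo (0 : ℝ) 1) (hF : 0 < F)
    (hΦ : 0 < Φ)
    (φ : (Fin n → ℝ) → ℝ) (hφint : IntegrableOn φ Ω)
    (hφ0 : ∀ᵐ x ∂(volume.restrict Ω), 0 ≤ φ x) (hφΦ : (∫ x in Ω, φ x) = Φ)
    (b : ℝ) (hb : 0 < b) (hbΛ : b < Λ)
    (hcond : μ / σ * (Tmax / Tmin) ^ (σ - 1) * ((Λ + b) / (Λ - b)) < 1) :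
    ∃ Lw : ℝ, 0 < Lw ∧
      ∀ lam₁ lam₂ : (Fin n → ℝ) → ℝ,
        IntegrableOn lam₁ Ω → IntegrableOn lam₂ Ω →
        Λ - b ≤ (∫ x in Ω, |lam₁ x|) → (∫ x in Ω, |lam₁ x|) ≤ Λ + b →
        Λ - b ≤ (∫ x in Ω, |lam₂ x|) → (∫ x in Ω, |lam₂ x|) ≤ Λ + b →
        ∀ W₁ W₂ : (Fin n → ℝ) → ℝ,
          IsWageSolution Ω F σ μ T φ lam₁ W₁ → IsWageSolution Ω F σ μ T φ lam₂ W₂ →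
          supNormOn Ω (fun x => W₁ x - W₂ x) ≤ Lw * ∫ x in Ω, |lam₁ x - lam₂ x| := by
  obtain ⟨x₀, hx₀⟩ : Ω.Nonempty := nonempty_of_measure_ne_zero hΩpos.ne'
  have hTmin0 : 0 < Tmin := by linarith
  have hTmax0 : 0 < Tmax := hTmin0.trans_le ((hT x₀ hx₀ x₀ hx₀).1.trans (hT x₀ hx₀ x₀ hx₀).2)
  have hk : ∀ x ∈ Ω, ∀ y ∈ Ω, T x y ^ (1 - σ) ∈ Icc (Tmax ^ (1 - σ)) (Tmin ^ (1 - σ)) :=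
    fun x hx y hy => rpow_mem_Icc_of_nonpos hTmin0 (hT x hx y hy) (by linarith)
  have hkc : ContinuousOn (Function.uncurry fun x y => T x y ^ (1 - σ)) (Ω ×ˢ Ω) :=
    hTcont.rpow_const fun p hp => Or.inl (hTmin0.trans_le (hT _ hp.1 _ hp.2).1).ne'
  have hρ : Tmin ^ (1 - σ) / Tmax ^ (1 - σ) = (Tmax / Tmin) ^ (σ - 1) := by
    rw [← div_rpow hTmin0.le hTmax0.le, ← inv_div, inv_rpow (by positivity),
      ← rpow_neg (by positivity), neg_sub]
  have hc : 0 < μ / σ := div_pos hμ.1 (by linarith)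
  have hκ₀ : 0 < μ / σ * (Tmax / Tmin) ^ (σ - 1) := by positivity
  have hκ : μ / σ * (Tmax / Tmin) ^ (σ - 1) < 1 :=
    (le_mul_of_one_le_right hκ₀.le ((one_le_div (by linarith)).mpr (by linarith))).trans_lt hcond
  refine ⟨wageLipschitzConst (μ / σ * (Tmax / Tmin) ^ (σ - 1)) ((Tmax / Tmin) ^ (σ - 1)) Φ
    (Λ - b), wageLipschitzConst_pos hκ₀ hκ (by positivity) hΦ (by linarith), ?_⟩
  intro lam₁ lam₂ hlam₁ hlam₂ hm₁ _ hm₂ _ W₁ W₂ hW₁ hW₂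
  have hT0 : ∀ x ∈ Ω, ∀ y ∈ Ω, 0 ≤ T x y := fun x hx y hy => hTmin0.le.trans (hT x hx y hy).1
  have key := supNormOn_sub_le_of_eqOn_wageOperator hΩc ⟨x₀, hx₀⟩ hkc (rpow_pos_of_pos hTmax0 _)
    hk hc.le (by rwa [hρ]) hφint hφ0 (by linarith) hlam₁ hlam₂ hm₁ hm₂
    hW₁.1 hW₂.1 hW₂.2.1 (hW₁.eqOn_wageOperator hΩc.measurableSet hF hσ.ne' hT0)
    (hW₂.eqOn_wageOperator hΩc.measurableSet hF hσ.ne' hT0)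
  rwa [hρ, hφΦ] at key

theorem wage_solution_lipschitz {n : ℕ} (Ω : Set (Fin n → ℝ))
    (hΩc : IsCompact Ω) (hΩpos : 0 < volume Ω)
    (T : (Fin n → ℝ) → (Fin n → ℝ) → ℝ)
    (hTcont : ContinuousOn (fun p : (Fin n → ℝ) × (Fin n → ℝ) => T p.1 p.2) (Ω ×ˢ Ω))
    (Tmin Tmax : ℝ) (hTmin : 1 ≤ Tmin)
    (hT : ∀ x ∈ Ω, ∀ y ∈ Ω, T x y ∈ Icc Tmin Tmax)
    (σ μ F Λ Φ : ℝ) (hσ : 1 < σ) (hμ : μ ∈ Ioo (0 : ℝ) 1) (hF : 0 < F)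
    (hΛ : 0 < Λ) (hΦ : 0 < Φ)
    (φ : (Fin n → ℝ) → ℝ) (hφint : IntegrableOn φ Ω)
    (hφ0 : ∀ᵐ x ∂(volume.restrict Ω), 0 ≤ φ x) (hφΦ : (∫ x in Ω, φ x) = Φ)
    (b : ℝ) (hb : 0 < b) (hbΛ : b < Λ)
    (hcond : μ / σ * (Tmax / Tmin) ^ (σ - 1) * ((Λ + b) / (Λ - b)) < 1) :
    ∃ Lw : ℝ, 0 < Lw ∧
      ∀ lam₁ lam₂ : (Fin n → ℝ) → ℝ,
        IntegrableOn lam₁ Ω → IntegrableOn lam₂ Ω →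
        Λ - b ≤ (∫ x in Ω, |lam₁ x|) → (∫ x in Ω, |lam₁ x|) ≤ Λ + b →
        Λ - b ≤ (∫ x in Ω, |lam₂ x|) → (∫ x in Ω, |lam₂ x|) ≤ Λ + b →
        ∀ W₁ W₂ : (Fin n → ℝ) → ℝ,
          IsWageSolution Ω F σ μ T φ lam₁ W₁ → IsWageSolution Ω F σ μ T φ lam₂ W₂ →
          supNormOn Ω (fun x => W₁ x - W₂ x) ≤ Lw * ∫ x in Ω, |lam₁ x - lam₂ x| :=
  wage_solution_lipschitz_general Ω hΩc hΩpos T hTcont Tmin Tmax hTmin hT σ μ F Λ Φ hσ hμ hF hΦ φ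
    hφint hφ0 hφΦ b hb hbΛ hcond
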